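/- arXiv:2601.09471 — 2 statements merged into one kernel-verified Lean document; each statement's English description precedes it below -/
import Mathlib

section
/- Let M ∈ ℝ^{r̄×r̄} be Hurwitz, N ∈ ℝ^{r̄×n₂}, Φ ∈ ℝ^{r̄×r̄}, Γ ∈ ℝ^{n₂×r̄}, and let T ∈ ℝ^{r̄×r̄} be invertible with T Φ − M T = N Γ; set Ψ := Γ T⁻¹. Let g : [0,∞) → ℝ^{n₂} be continuous, and let differentiable functions ϱ, η : [0,∞) → ℝ^{r̄} and x₂ : [0,∞) → ℝ^{n₂} satisfy ϱ̇(t) = T Φ T⁻¹ ϱ(t), ẋ₂(t) = g(t) − Ψ ϱ(t), and η̇(t) = M η(t) + N g(t) − M N x₂(t). Then, for all initial conditions, the estimate ϱ̂(t) := η(t) − N x₂(t) satisfies that ϱ̂(t) − ϱ(t) converges to zero exponentially as t → ∞; in fact d/dt (ϱ̂ − ϱ) = M (ϱ̂ − ϱ) and M is Hurwitz. -/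
open Matrix Filter Topology

/-- A real square matrix is Hurwitz if all of its complex eigenvalues have
negative real part. -/
def Hurwitz {n : Type*} [Fintype n] [DecidableEq n] (A : Matrix n n ℝ) : Prop :=
  ∀ μ ∈ spectrum ℂ (A.map (algebraMap ℝ ℂ)), μ.re < 0

/-- `e(t) → 0` exponentially: `‖e t‖ ≤ c e^{-λ t}` for all sufficiently large `t`. -/
def ExpDecay {E : Type*} [Norm E] (e : ℝ → E) : Prop :=
  ∃ c > (0:ℝ), ∃ lam > (0:ℝ), ∃ T : ℝ, ∀ t ≥ T, ‖e t‖ ≤ c * Real.exp (-lam * t)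

/-!
The error `e := ϱ̂ - ϱ` obeys `ė = M e`: the Sylvester equation `T Φ - M T = N Γ` turns the
disturbance term `N Γ T⁻¹ ϱ` into `(T Φ T⁻¹ - M) ϱ`, which cancels the exosystem drift up to
`-M ϱ`. Hence `e t = exp (t M) (e 0)`. After complexification, `e 0` is a sum of generalized
eigenvectors of `M`; on the generalized eigenspace of `μ`, `exp (t M)` acts as `e^{t μ}` times a
polynomial in `t`, and since `Re μ < 0` this decays exponentially.
-/

open NormedSpace Finset
open scoped Nat

namespace ExpDecay

variable {E F : Type*} [SeminormedAddCommGroup E] [SeminormedAddCommGroup F] {f g : ℝ → E}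

theorem of_forall_le {c lam : ℝ} (hlam : 0 < lam)
    (h : ∀ t ≥ 0, ‖f t‖ ≤ c * Real.exp (-lam * t)) : ExpDecay f :=
  ⟨max c 1, by positivity, lam, hlam, 0, fun t ht =>
    (h t ht).trans (by gcongr; exact le_max_left _ _)⟩

theorem zero : ExpDecay fun _ : ℝ => (0 : E) :=
  of_forall_le (c := 1) one_pos fun t _ => by simpa using (Real.exp_pos _).le

theorem mono {h : ℝ → F} (hf : ExpDecay f) (hhf : ∀ᶠ t in atTop, ‖h t‖ ≤ ‖f t‖) :
    ExpDecay h := by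
  obtain ⟨c, hc, lam, hlam, T, hT⟩ := hf
  obtain ⟨T', hT'⟩ := eventually_atTop.1 hhf
  exact ⟨c, hc, lam, hlam, max T T', fun t ht =>
    (hT' t (le_of_max_le_right ht)).trans (hT t (le_of_max_le_left ht))⟩

theorem add (hf : ExpDecay f) (hg : ExpDecay g) : ExpDecay fun t => f t + g t := by
  obtain ⟨c₁, hc₁, l₁, hl₁, T₁, h₁⟩ := hf
  obtain ⟨c₂, hc₂, l₂, hl₂, T₂, h₂⟩ := hg
  refine ⟨c₁ + c₂, by positivity, min l₁ l₂, lt_min hl₁ hl₂, max (max T₁ T₂) 0, fun t ht => ?_⟩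
  obtain ⟨⟨ht₁, ht₂⟩, ht₀⟩ : (T₁ ≤ t ∧ T₂ ≤ t) ∧ 0 ≤ t := by simpa using ht
  have e₁ : Real.exp (-l₁ * t) ≤ Real.exp (-min l₁ l₂ * t) := by
    gcongr; exact min_le_left _ _
  have e₂ : Real.exp (-l₂ * t) ≤ Real.exp (-min l₁ l₂ * t) := by
    gcongr; exact min_le_right _ _
  calc ‖f t + g t‖ ≤ ‖f t‖ + ‖g t‖ := norm_add_le _ _
    _ ≤ c₁ * Real.exp (-l₁ * t) + c₂ * Real.exp (-l₂ * t) := add_le_add (h₁ t ht₁) (h₂ t ht₂)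
    _ ≤ (c₁ + c₂) * Real.exp (-min l₁ l₂ * t) := by nlinarith

end ExpDecay

theorem pow_div_factorial_le_exp_mul_div_pow {lam t : ℝ} (hlam : 0 < lam) (ht : 0 ≤ t) (k : ℕ) :
    t ^ k / k ! ≤ Real.exp (lam * t) / lam ^ k := by
  have h := Real.pow_div_factorial_le_exp _ (mul_nonneg hlam.le ht) k
  rw [mul_pow] at h
  rw [le_div_iff₀ (by positivity)]
  calc t ^ k / k ! * lam ^ k = lam ^ k * t ^ k / k ! := by ring
    _ ≤ Real.exp (lam * t) := h

theorem norm_sum_factorial_inv_smul_pow_smul_le {E : Type*} [SeminormedAddCommGroup E]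
    [NormedSpace ℂ E] {lam t : ℝ} (hlam : 0 < lam) (ht : 0 ≤ t) (s : Finset ℕ) (v : ℕ → E) :
    ‖∑ k ∈ s, (k ! : ℂ)⁻¹ • (t : ℂ) ^ k • v k‖ ≤
      (∑ k ∈ s, ‖v k‖ / lam ^ k) * Real.exp (lam * t) := by
  rw [sum_mul]
  refine (norm_sum_le _ _).trans (sum_le_sum fun k _ => ?_)
  calc ‖(k ! : ℂ)⁻¹ • (t : ℂ) ^ k • v k‖ = t ^ k / k ! * ‖v k‖ := by
        simp only [norm_smul, norm_inv, norm_pow, Complex.norm_natCast, Complex.norm_real,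
          Real.norm_eq_abs, abs_of_nonneg ht]
        ring
    _ ≤ Real.exp (lam * t) / lam ^ k * ‖v k‖ := by
        gcongr ?_ * _
        exact pow_div_factorial_le_exp_mul_div_pow hlam ht k
    _ = ‖v k‖ / lam ^ k * Real.exp (lam * t) := by ring

section StableLinearODE

variable {E : Type*} [NormedAddCommGroup E] [NormedSpace ℂ E] [CompleteSpace E]

theorem exp_apply_eq_sum_of_pow_apply_eq_zero (B : E →L[ℂ] E) {m : ℕ} {w : E}
    (hw : (B ^ m) w = 0) : exp B w = ∑ k ∈ range m, (k ! : ℂ)⁻¹ • (B ^ k) w := by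
  have hsum := (ContinuousLinearMap.apply ℂ E w).hasSum (exp_series_hasSum_exp' (𝕂 := ℂ) B)
  refine hsum.unique (hasSum_sum_of_ne_finset_zero fun k hk => ?_)
  obtain ⟨j, rfl⟩ := Nat.exists_eq_add_of_le (not_lt.1 (mt mem_range.2 hk))
  simp [add_comm m j, pow_add, mul_apply_eq_comp, hw]

theorem exp_smul_apply_eq_of_mem_maxGenEigenspace (A : E →L[ℂ] E) {μ : ℂ} {w : E}
    (hw : w ∈ Module.End.maxGenEigenspace (A : E →ₗ[ℂ] E) μ) :
    ∃ m : ℕ, ∀ z : ℂ, exp (z • A) w =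
      Complex.exp (z * μ) • ∑ k ∈ range m, (k ! : ℂ)⁻¹ • z ^ k • ((A - μ • 1) ^ k) w := by
  obtain ⟨m, hm⟩ := (Module.End.mem_maxGenEigenspace _ _ _).1 hw
  refine ⟨m, fun z => ?_⟩
  let +nondep : NormedAlgebra ℚ (E →L[ℂ] E) := .restrictScalars ℚ ℂ _
  have hsplit : z • A = algebraMap ℂ (E →L[ℂ] E) (z * μ) + z • (A - μ • 1) := by
    rw [Algebra.algebraMap_eq_smul_one, smul_sub, mul_smul]
    abel
  have hm' : ((A - μ • 1) ^ m) w = 0 := by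
    rw [← ContinuousLinearMap.coe_coe, ContinuousLinearMap.toLinearMap_pow]
    simpa using hm
  have hnil : ((z • (A - μ • 1)) ^ m) w = 0 := by
    rw [smul_pow, _root_.smul_apply, hm', smul_zero]
  rw [hsplit, NormedSpace.exp_add_of_commute (Algebra.commutes _ _), ← algebraMap_exp_comm,
    ← Complex.exp_eq_exp_ℂ, mul_apply_eq_comp, exp_apply_eq_sum_of_pow_apply_eq_zero _ hnil]
  simp only [Algebra.algebraMap_eq_smul_one, _root_.smul_apply, smul_pow, smul_sum,
    one_apply_eq_self, map_sum, map_smul]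
  exact sum_congr rfl fun k _ => by module

theorem expDecay_exp_smul_apply_of_mem_maxGenEigenspace (A : E →L[ℂ] E) {μ : ℂ}
    (hμ : μ.re < 0) {w : E} (hw : w ∈ Module.End.maxGenEigenspace (A : E →ₗ[ℂ] E) μ) :
    ExpDecay fun t : ℝ => exp (t • A) w := by
  obtain ⟨m, hexp⟩ := exp_smul_apply_eq_of_mem_maxGenEigenspace A hw
  -- Half of the rate `-Re μ` is spent on absorbing the polynomial factor.
  set lam := -μ.re / 2
  have hlam : 0 < lam := by simp only [lam]; linarith
  set C := ∑ k ∈ range m, ‖((A - μ • 1) ^ k) w‖ / lam ^ k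
  refine ExpDecay.of_forall_le (c := C) hlam fun t ht => ?_
  rw [← Complex.coe_smul, hexp, norm_smul, Complex.norm_exp, Complex.re_ofReal_mul]
  calc Real.exp (t * μ.re) * ‖∑ k ∈ range m, (k ! : ℂ)⁻¹ • (t : ℂ) ^ k • ((A - μ • 1) ^ k) w‖
      ≤ Real.exp (t * μ.re) * (C * Real.exp (lam * t)) := by
        gcongr
        exact norm_sum_factorial_inv_smul_pow_smul_le hlam ht _ _
    _ = C * Real.exp (-lam * t) := by
        rw [mul_left_comm, ← Real.exp_add]
        congr 2
        ring

theorem expDecay_exp_smul_apply [FiniteDimensional ℂ E] (A : E →L[ℂ] E)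
    (hA : ∀ μ, Module.End.HasEigenvalue (A : E →ₗ[ℂ] E) μ → μ.re < 0) (v : E) :
    ExpDecay fun t : ℝ => exp (t • A) v := by
  have hv : v ∈ ⨆ μ, Module.End.maxGenEigenspace (A : E →ₗ[ℂ] E) μ := by
    rw [Module.End.iSup_maxGenEigenspace_eq_top]
    trivial
  induction hv using Submodule.iSup_induction' with
  | mem μ w hw =>
    rcases eq_or_ne w 0 with rfl | hw₀
    · simpa using ExpDecay.zero
    · have hμ : Module.End.HasEigenvalue (A : E →ₗ[ℂ] E) μ :=
        Module.End.HasUnifEigenvalue.lt zero_lt_one ((Submodule.ne_bot_iff _).2 ⟨w, hw, hw₀⟩)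
      exact expDecay_exp_smul_apply_of_mem_maxGenEigenspace A (hA μ hμ) hw
  | zero => simpa using ExpDecay.zero
  | add x y _ _ hx hy => simpa only [map_add] using hx.add hy

theorem eq_exp_smul_apply_of_hasDerivAt (A : E →L[ℂ] E) {e : ℝ → E}
    (he : ∀ t ≥ 0, HasDerivAt e (A (e t)) t) {t : ℝ} (ht : 0 ≤ t) :
    e t = exp (t • A) (e 0) := by
  let +nondep : NormedAlgebra ℚ (E →L[ℂ] E) := .restrictScalars ℚ ℂ _
  set y : ℝ → E := fun s => (exp ((-s) • A)).restrictScalars ℝ (e s)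
  have hy : ∀ s ≥ 0, HasDerivAt y 0 s := by
    intro s hs
    have hexp : HasDerivAt (fun u : ℝ => (exp ((-u) • A)).restrictScalars ℝ)
        (-(exp ((-s) • A) * A).restrictScalars ℝ) s := by
      have h := (hasDerivAt_exp_smul_const A (-s)).scomp s (hasDerivAt_neg s)
      simpa [Function.comp_def] using
        ((ContinuousLinearMap.restrictScalarsL ℂ E E ℝ ℝ).hasFDerivAt).comp_hasDerivAt s h
    simpa [y] using hexp.clm_apply (he s hs)
  have hconst : y t = y 0 :=
    constant_of_has_deriv_right_zero (fun x hx => (hy x hx.1).continuousAt.continuousWithinAt)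
      (fun x hx => (hy x hx.1).hasDerivWithinAt) t ⟨ht, le_rfl⟩
  have hinv : exp (t • A) * exp ((-t) • A) = 1 := by
    rw [neg_smul, ← NormedSpace.exp_add_of_commute (Commute.refl _).neg_right, add_neg_cancel,
      exp_zero]
  calc e t = (exp (t • A) * exp ((-t) • A)) (e t) := by rw [hinv]; rfl
    _ = exp (t • A) (y t) := rfl
    _ = exp (t • A) (e 0) := by rw [hconst]; simp [y]

theorem ContinuousLinearMap.expDecay_of_hasDerivAt [FiniteDimensional ℂ E] (A : E →L[ℂ] E)
    (hA : ∀ μ, Module.End.HasEigenvalue (A : E →ₗ[ℂ] E) μ → μ.re < 0) {e : ℝ → E}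
    (he : ∀ t ≥ 0, HasDerivAt e (A (e t)) t) : ExpDecay e :=
  (expDecay_exp_smul_apply A hA (e 0)).mono <| (eventually_ge_atTop 0).mono fun _ ht => by
    rw [eq_exp_smul_apply_of_hasDerivAt A he ht]

end StableLinearODE

section Complexification

variable {ι κ : Type*} [Fintype ι] [Fintype κ]

noncomputable def EuclideanSpace.ofRealCLM : EuclideanSpace ℝ ι →L[ℝ] EuclideanSpace ℂ ι :=
  LinearMap.toContinuousLinearMap
    { toFun v := WithLp.toLp 2 fun i => (v i : ℂ)
      map_add' _ _ := by ext; simp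
      map_smul' _ _ := by ext; simp }

@[simp]
theorem EuclideanSpace.ofRealCLM_apply (v : EuclideanSpace ℝ ι) (i : ι) :
    EuclideanSpace.ofRealCLM v i = (v i : ℂ) := rfl

theorem EuclideanSpace.norm_ofRealCLM (v : EuclideanSpace ℝ ι) :
    ‖EuclideanSpace.ofRealCLM v‖ = ‖v‖ := by
  simp [EuclideanSpace.norm_eq]

theorem EuclideanSpace.ofRealCLM_toEuclideanLin [DecidableEq κ] (M : Matrix ι κ ℝ)
    (v : EuclideanSpace ℝ κ) :
    EuclideanSpace.ofRealCLM (toEuclideanLin M v) =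
      toEuclideanLin (M.map (algebraMap ℝ ℂ)) (EuclideanSpace.ofRealCLM v) := by
  ext i
  simp [toLpLin_apply, mulVec, dotProduct]

end Complexification

section Hurwitz

variable {ι : Type*} [Fintype ι] [DecidableEq ι] {M : Matrix ι ι ℝ}

theorem Hurwitz.re_lt_zero_of_hasEigenvalue (hM : Hurwitz M) {μ : ℂ}
    (hμ : Module.End.HasEigenvalue (toEuclideanLin (M.map (algebraMap ℝ ℂ))) μ) : μ.re < 0 :=
  hM μ (Matrix.spectrum_toLpLin (A := M.map (algebraMap ℝ ℂ)) 2 ▸ hμ.mem_spectrum)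

theorem Hurwitz.expDecay_of_hasDerivAt (hM : Hurwitz M) {e : ℝ → EuclideanSpace ℝ ι}
    (he : ∀ t ≥ 0, HasDerivAt e (toEuclideanLin M (e t)) t) : ExpDecay e := by
  obtain ⟨A, hA⟩ : ∃ A : EuclideanSpace ℂ ι →L[ℂ] EuclideanSpace ℂ ι,
      (A : EuclideanSpace ℂ ι →ₗ[ℂ] EuclideanSpace ℂ ι) = toEuclideanLin (M.map (algebraMap ℝ ℂ)) :=
    ⟨LinearMap.toContinuousLinearMap _, rfl⟩
  have hec : ∀ t ≥ 0, HasDerivAt (fun s => EuclideanSpace.ofRealCLM (e s))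
      (A (EuclideanSpace.ofRealCLM (e t))) t := fun t ht => by
    have h := EuclideanSpace.ofRealCLM.hasFDerivAt.comp_hasDerivAt t (he t ht)
    rwa [EuclideanSpace.ofRealCLM_toEuclideanLin, ← hA, ContinuousLinearMap.coe_coe] at h
  exact (A.expDecay_of_hasDerivAt (fun μ hμ => hM.re_lt_zero_of_hasEigenvalue (hA ▸ hμ)) hec).mono
    (.of_forall fun t => (EuclideanSpace.norm_ofRealCLM (e t)).ge)

end Hurwitz

section InternalModel

variable {ι κ : Type*} [Fintype ι] [DecidableEq ι] [Fintype κ]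
  {M Φ T : Matrix ι ι ℝ} {N : Matrix ι κ ℝ} {Γ : Matrix κ ι ℝ}

theorem mul_mul_nonsing_inv_of_sub_eq (hT : IsUnit T) (hSyl : T * Φ - M * T = N * Γ) :
    N * (Γ * T⁻¹) = T * Φ * T⁻¹ - M := by
  rw [← Matrix.mul_assoc, ← hSyl, Matrix.sub_mul,
    Matrix.mul_nonsing_inv_cancel_right T M ((Matrix.isUnit_iff_isUnit_det T).1 hT)]

theorem hasDerivAt_internalModel_error [DecidableEq κ] (hT : IsUnit T)
    (hSyl : T * Φ - M * T = N * Γ) {g x₂ : ℝ → EuclideanSpace ℝ κ}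
    {ϱ η : ℝ → EuclideanSpace ℝ ι} {t : ℝ}
    (hϱ : HasDerivAt ϱ (toEuclideanLin (T * Φ * T⁻¹) (ϱ t)) t)
    (hx₂ : HasDerivAt x₂ (g t - toEuclideanLin (Γ * T⁻¹) (ϱ t)) t)
    (hη : HasDerivAt η (toEuclideanLin M (η t) + toEuclideanLin N (g t)
        - toEuclideanLin (M * N) (x₂ t)) t) :
    HasDerivAt (fun s => (η s - toEuclideanLin N (x₂ s)) - ϱ s)
      (toEuclideanLin M ((η t - toEuclideanLin N (x₂ t)) - ϱ t)) t := by
  have hNx₂ := (toEuclideanLin N).toContinuousLinearMap.hasFDerivAt.comp_hasDerivAt t hx₂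
  refine ((hη.sub hNx₂).sub hϱ).congr_deriv ?_
  have hNΨ := congrArg (fun A => toEuclideanLin A (ϱ t)) (mul_mul_nonsing_inv_of_sub_eq hT hSyl)
  simp only [toLpLin_mul_same, LinearMap.comp_apply, map_sub, LinearMap.sub_apply] at hNΨ ⊢
  simp only [LinearMap.coe_toContinuousLinearMap', hNΨ]
  abel

end InternalModel

theorem stmt1_general {rbar n₂ : ℕ}
    (M Φ T : Matrix (Fin rbar) (Fin rbar) ℝ)
    (N : Matrix (Fin rbar) (Fin n₂) ℝ) (Γ : Matrix (Fin n₂) (Fin rbar) ℝ)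
    (hM : Hurwitz M) (hT : IsUnit T) (hSyl : T * Φ - M * T = N * Γ)
    (g : ℝ → EuclideanSpace ℝ (Fin n₂))
    (ϱ η : ℝ → EuclideanSpace ℝ (Fin rbar)) (x₂ : ℝ → EuclideanSpace ℝ (Fin n₂))
    (hϱ : ∀ t ≥ (0:ℝ), HasDerivAt ϱ (Matrix.toEuclideanLin (T * Φ * T⁻¹) (ϱ t)) t)
    (hx₂ : ∀ t ≥ (0:ℝ), HasDerivAt x₂
      (g t - Matrix.toEuclideanLin (Γ * T⁻¹) (ϱ t)) t)
    (hη : ∀ t ≥ (0:ℝ), HasDerivAt η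
      (Matrix.toEuclideanLin M (η t) + Matrix.toEuclideanLin N (g t)
        - Matrix.toEuclideanLin (M * N) (x₂ t)) t) :
    (∀ t ≥ (0:ℝ), HasDerivAt (fun s => (η s - Matrix.toEuclideanLin N (x₂ s)) - ϱ s)
        (Matrix.toEuclideanLin M ((η t - Matrix.toEuclideanLin N (x₂ t)) - ϱ t)) t)
    ∧ ExpDecay (fun t => (η t - Matrix.toEuclideanLin N (x₂ t)) - ϱ t) := by
  have herror := fun t (ht : t ≥ (0:ℝ)) =>
    hasDerivAt_internalModel_error hT hSyl (hϱ t ht) (hx₂ t ht) (hη t ht)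
  exact ⟨herror, hM.expDecay_of_hasDerivAt herror⟩

/-- The internal model `η̇ = M η + N g − M N x₂` produces an
exponentially convergent estimate `ϱ̂ := η − N x₂` of the exosystem state `ϱ`;
in fact the error satisfies `d/dt (ϱ̂ − ϱ) = M (ϱ̂ − ϱ)` and `M` is Hurwitz. -/
theorem stmt1 {rbar n₂ : ℕ}
    (M Φ T : Matrix (Fin rbar) (Fin rbar) ℝ)
    (N : Matrix (Fin rbar) (Fin n₂) ℝ) (Γ : Matrix (Fin n₂) (Fin rbar) ℝ)
    (hM : Hurwitz M) (hT : IsUnit T) (hSyl : T * Φ - M * T = N * Γ)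
    (g : ℝ → EuclideanSpace ℝ (Fin n₂)) (hg : ContinuousOn g (Set.Ici 0))
    (ϱ η : ℝ → EuclideanSpace ℝ (Fin rbar)) (x₂ : ℝ → EuclideanSpace ℝ (Fin n₂))
    (hϱ : ∀ t ≥ (0:ℝ), HasDerivAt ϱ (Matrix.toEuclideanLin (T * Φ * T⁻¹) (ϱ t)) t)
    (hx₂ : ∀ t ≥ (0:ℝ), HasDerivAt x₂
      (g t - Matrix.toEuclideanLin (Γ * T⁻¹) (ϱ t)) t)
    (hη : ∀ t ≥ (0:ℝ), HasDerivAt η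
      (Matrix.toEuclideanLin M (η t) + Matrix.toEuclideanLin N (g t)
        - Matrix.toEuclideanLin (M * N) (x₂ t)) t) :
    (∀ t ≥ (0:ℝ), HasDerivAt (fun s => (η s - Matrix.toEuclideanLin N (x₂ s)) - ϱ s)
        (Matrix.toEuclideanLin M ((η t - Matrix.toEuclideanLin N (x₂ t)) - ϱ t)) t)
    ∧ ExpDecay (fun t => (η t - Matrix.toEuclideanLin N (x₂ t)) - ϱ t) :=
  stmt1_general M Φ T N Γ hM hT hSyl g ϱ η x₂ hϱ hx₂ hη
end

section
/- Let x̃ : [0,∞) → ℝⁿ be differentiable (the tracking error of the closed-loop system) and let d̃ : [0,∞) → ℝ^{n₂} be continuous with d̃(t) → 0 as t → ∞ (the disturbance estimation error). Suppose there exist a continuously differentiable function V : [0,∞) × ℝⁿ → ℝ, class-K∞ functions α̲, ᾱ, α, and a class-K function σ such that α̲(‖ξ‖) ≤ V(t,ξ) ≤ ᾱ(‖ξ‖) for all t ≥ 0 and ξ ∈ ℝⁿ, and such that the derivative along the trajectory satisfies (d/dt) V(t, x̃(t)) ≤ −α(‖x̃(t)‖) + σ(‖d̃(t)‖) for all t ≥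 0. Then x̃ is bounded on [0,∞) and lim_{t→∞} x̃(t) = 0. -/
/-!
Along the trajectory, `W t = V t (x̃ t)` satisfies `W' ≤ -α ‖x̃‖ + σ ‖d̃‖` with `σ ‖d̃‖ → 0`.
Given `ε > 0`, choose `ρ > 0` with `ᾱ ρ < α̲ ε`; once `σ ‖d̃‖ < α ρ / 2`, every time with
`W > ᾱ ρ` has `‖x̃‖ > ρ` and hence `W' ≤ -α ρ / 2`. A function bounded below cannot decrease at a
uniform rate forever, and it cannot climb back over a level above which it decreases, so
eventually `W ≤ ᾱ ρ`, which forces `‖x̃‖ < ε`. Boundedness then follows from continuity.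
-/

open Filter Topology

/-- Class-`𝒦` function: continuous, strictly increasing on `[0,∞)`, vanishing at `0`. -/
def IsClassK (f : ℝ → ℝ) : Prop :=
  ContinuousOn f (Set.Ici 0) ∧ StrictMonoOn f (Set.Ici 0) ∧ f 0 = 0

/-- Class-`𝒦∞` function: class `𝒦` and unbounded. -/
def IsClassKInf (f : ℝ → ℝ) : Prop :=
  IsClassK f ∧ Tendsto f atTop atTop

open Set Bornology

namespace IsClassK

variable {f : ℝ → ℝ}

theorem lt_iff_lt (hf : IsClassK f) {x y : ℝ} (hx : 0 ≤ x) (hy : 0 ≤ y) : f x < f y ↔ x < y :=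
  hf.2.1.lt_iff_lt hx hy

theorem le_iff_le (hf : IsClassK f) {x y : ℝ} (hx : 0 ≤ x) (hy : 0 ≤ y) : f x ≤ f y ↔ x ≤ y :=
  hf.2.1.le_iff_le hx hy

theorem nonneg (hf : IsClassK f) {x : ℝ} (hx : 0 ≤ x) : 0 ≤ f x :=
  hf.2.2 ▸ (hf.le_iff_le le_rfl hx).2 hx

theorem pos (hf : IsClassK f) {x : ℝ} (hx : 0 < x) : 0 < f x :=
  hf.2.2 ▸ (hf.lt_iff_lt le_rfl hx.le).2 hx

theorem tendsto_nhdsGE_zero (hf : IsClassK f) : Tendsto f (𝓝[≥] 0) (𝓝 0) :=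
  by simpa only [hf.2.2] using (hf.1 0 self_mem_Ici).tendsto

theorem exists_pos_lt (hf : IsClassK f) {c : ℝ} (hc : 0 < c) : ∃ ρ > 0, f ρ < c := by
  have hlt : ∀ᶠ ρ in 𝓝[>] 0, f ρ < c :=
    (hf.tendsto_nhdsGE_zero.mono_left (nhdsWithin_mono _ Ioi_subset_Ici_self)).eventually_lt_const hc
  obtain ⟨ρ, hρc, hρ⟩ := (hlt.and self_mem_nhdsWithin).exists
  exact ⟨ρ, hρ, hρc⟩

theorem tendsto_comp_norm (hf : IsClassK f) {ι E : Type*} [SeminormedAddGroup E] {l : Filter ι}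
    {g : ι → E} (hg : Tendsto g l (𝓝 0)) : Tendsto (fun i => f ‖g i‖) l (𝓝 0) :=
  hf.tendsto_nhdsGE_zero.comp <|
    tendsto_nhdsWithin_iff.2 ⟨by simpa using hg.norm, .of_forall fun _ => norm_nonneg _⟩

end IsClassK

section Descent

variable {W : ℝ → ℝ} {T M : ℝ}

theorem le_max_of_deriv_neg_above (hdiff : ∀ t ≥ T, DifferentiableAt ℝ W t)
    (hder : ∀ t ≥ T, M < W t → deriv W t < 0) {a b : ℝ} (ha : T ≤ a) (hab : a ≤ b) :
    W b ≤ max (W a) M := by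
  refine le_of_forall_gt_imp_ge_of_dense fun c hc => ?_
  have hle := image_le_of_deriv_right_lt_deriv_boundary (b := b) (B := fun _ => c) (B' := fun _ => 0)
    (fun s hs => (hdiff s (ha.trans hs.1)).continuousAt.continuousWithinAt)
    (fun s hs => (hdiff s (ha.trans hs.1)).hasDerivAt.hasDerivWithinAt)
    ((le_max_left _ _).trans hc.le) (fun _ => hasDerivAt_const _ _)
    (fun s hs hWs => hder s (ha.trans hs.1) (hWs ▸ (le_max_right _ _).trans_lt hc))
  exact hle ⟨hab, le_rfl⟩

theorem exists_le_of_deriv_le_neg_above {δ m : ℝ} (hδ : 0 < δ)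
    (hdiff : ∀ t ≥ T, DifferentiableAt ℝ W t) (hder : ∀ t ≥ T, M < W t → deriv W t ≤ -δ)
    (hm : ∀ t ≥ T, m ≤ W t) : ∃ t ≥ T, W t ≤ M := by
  by_contra! hgt
  set t := T + (W T - m) / δ + 1
  have hWT : 0 ≤ (W T - m) / δ := div_nonneg (sub_nonneg.2 (hm T le_rfl)) hδ.le
  have hTt : T ≤ t := by linarith
  have hdrop : W t - W T ≤ -δ * (t - T) :=
    (convex_Ici T).image_sub_le_mul_sub_of_deriv_le
      (fun s hs => (hdiff s hs).continuousAt.continuousWithinAt)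
      (fun s hs => (hdiff s (interior_subset hs)).differentiableWithinAt)
      (fun s hs => hder s (interior_subset hs) (hgt s (interior_subset hs)))
      T self_mem_Ici t hTt hTt
  have ht : δ * (t - T) = W T - m + δ := by
    simp only [t]
    field_simp
    ring
  linarith [hm t hTt]

theorem eventually_le_of_deriv_le_neg_above {δ m : ℝ} (hδ : 0 < δ)
    (hdiff : ∀ᶠ t in atTop, DifferentiableAt ℝ W t)
    (hder : ∀ᶠ t in atTop, M < W t → deriv W t ≤ -δ)
    (hm : ∀ᶠ t in atTop, m ≤ W t) : ∀ᶠ t in atTop, W t ≤ M := by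
  obtain ⟨T, hT⟩ := (hdiff.and (hder.and hm)).exists_forall_of_atTop
  have hdiff' : ∀ t ≥ T, DifferentiableAt ℝ W t := fun t ht => (hT t ht).1
  obtain ⟨t₀, ht₀, hWt₀⟩ := exists_le_of_deriv_le_neg_above hδ hdiff'
    (fun t ht => (hT t ht).2.1) (fun t ht => (hT t ht).2.2)
  filter_upwards [eventually_ge_atTop t₀] with t ht
  have hneg : ∀ t ≥ T, M < W t → deriv W t < 0 :=
    fun t ht hWt => ((hT t ht).2.1 hWt).trans_lt (neg_neg_of_pos hδ)
  simpa only [max_eq_right hWt₀] using le_max_of_deriv_neg_above hdiff' hneg ht₀ ht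

end Descent

theorem tendsto_zero_of_issLyapunov {E : Type*} [SeminormedAddGroup E] {x : ℝ → E}
    {W r αl αu α : ℝ → ℝ} (hαl : IsClassK αl) (hαu : IsClassK αu) (hα : IsClassK α)
    (hdiff : ∀ᶠ t in atTop, DifferentiableAt ℝ W t)
    (hbound : ∀ᶠ t in atTop, αl ‖x t‖ ≤ W t ∧ W t ≤ αu ‖x t‖)
    (hder : ∀ᶠ t in atTop, deriv W t ≤ -α ‖x t‖ + r t)
    (hr : Tendsto r atTop (𝓝 0)) : Tendsto x atTop (𝓝 0) := by
  refine NormedAddGroup.tendsto_nhds_zero.2 fun ε hε => ?_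
  obtain ⟨ρ, hρ, hρε⟩ := hαu.exists_pos_lt (hαl.pos hε)
  have hαρ : 0 < α ρ / 2 := half_pos (hα.pos hρ)
  have hW_nonneg : ∀ᶠ t in atTop, 0 ≤ W t := by
    filter_upwards [hbound] with t hb using (hαl.nonneg (norm_nonneg _)).trans hb.1
  have hdecay : ∀ᶠ t in atTop, αu ρ < W t → deriv W t ≤ -(α ρ / 2) := by
    filter_upwards [hbound, hder, hr.eventually_lt_const hαρ] with t hb hd hrt hWt
    have hρx : ρ < ‖x t‖ := (hαu.lt_iff_lt hρ.le (norm_nonneg _)).1 (hWt.trans_le hb.2)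
    have hαx : α ρ ≤ α ‖x t‖ := (hα.le_iff_le hρ.le (norm_nonneg _)).2 hρx.le
    linarith
  filter_upwards [eventually_le_of_deriv_le_neg_above hαρ hdiff hdecay hW_nonneg, hbound]
    with t hWt hb
  exact (hαl.lt_iff_lt (norm_nonneg _) hε.le).1 (hb.1.trans_lt (hWt.trans_lt hρε))

theorem exists_norm_le_of_continuousOn_Ici_of_tendsto {E : Type*} [SeminormedAddGroup E]
    {f : ℝ → E} {a : ℝ} {l : E} (hf : ContinuousOn f (Ici a)) (hl : Tendsto f atTop (𝓝 l)) :
    ∃ C, ∀ t ≥ a, ‖f t‖ ≤ C := by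
  obtain ⟨s, hs, hbdd⟩ := Metric.exists_isBounded_image_of_tendsto hl
  obtain ⟨b, hb⟩ := mem_atTop_sets.1 hs
  have hcpt : IsBounded (f '' Icc a b) :=
    (isCompact_Icc.image_of_continuousOn (hf.mono Icc_subset_Ici_self)).isBounded
  obtain ⟨C, hC⟩ := isBounded_iff_forall_norm_le.1 (hcpt.union hbdd)
  refine ⟨C, fun t ht => hC _ ?_⟩
  rcases le_total t b with htb | hbt
  · exact Or.inl (mem_image_of_mem f ⟨ht, htb⟩)
  · exact Or.inr (mem_image_of_mem f (hb t hbt))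

theorem stmt6_general {n n₂ : ℕ}
    (xt : ℝ → EuclideanSpace ℝ (Fin n)) (dt : ℝ → EuclideanSpace ℝ (Fin n₂))
    (hxt : ∀ t ≥ (0:ℝ), DifferentiableAt ℝ xt t)
    (hdt0 : Tendsto dt atTop (nhds 0))
    (V : ℝ → EuclideanSpace ℝ (Fin n) → ℝ)
    (hV : ContDiff ℝ 1 (fun p : ℝ × EuclideanSpace ℝ (Fin n) => V p.1 p.2))
    (αl αu α σ : ℝ → ℝ)
    (hαl : IsClassKInf αl) (hαu : IsClassKInf αu) (hα : IsClassKInf α)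
    (hσ : IsClassK σ)
    (hVbound : ∀ t ≥ (0:ℝ), ∀ ξ : EuclideanSpace ℝ (Fin n),
      αl ‖ξ‖ ≤ V t ξ ∧ V t ξ ≤ αu ‖ξ‖)
    (hdV : ∀ t ≥ (0:ℝ),
      deriv (fun s => V s (xt s)) t ≤ -α ‖xt t‖ + σ ‖dt t‖) :
    (∃ C, ∀ t ≥ (0:ℝ), ‖xt t‖ ≤ C) ∧ Tendsto xt atTop (nhds 0) := by
  have hWdiff : ∀ t ≥ (0:ℝ), DifferentiableAt ℝ (fun s => V s (xt s)) t := fun t ht =>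
    DifferentiableAt.comp (g := fun p : ℝ × EuclideanSpace ℝ (Fin n) => V p.1 p.2) t
      (hV.differentiable one_ne_zero _) (differentiableAt_id.prodMk (hxt t ht))
  have hconv : Tendsto xt atTop (𝓝 0) :=
    tendsto_zero_of_issLyapunov hαl.1 hαu.1 hα.1 ((eventually_ge_atTop 0).mono hWdiff)
      ((eventually_ge_atTop 0).mono fun t ht => hVbound t ht (xt t))
      ((eventually_ge_atTop 0).mono hdV) (hσ.tendsto_comp_norm hdt0)
  exact ⟨exists_norm_le_of_continuousOn_Ici_of_tendsto
    (fun t ht => (hxt t ht).continuousAt.continuousWithinAt) hconv, hconv⟩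

/-- Matched-disturbance tracking: an ISS-Lyapunov inequality
along the tracking error `x̃`, driven by a vanishing disturbance estimation
error `d̃`, implies that `x̃` is bounded and converges to zero. -/
theorem stmt6 {n n₂ : ℕ}
    (xt : ℝ → EuclideanSpace ℝ (Fin n)) (dt : ℝ → EuclideanSpace ℝ (Fin n₂))
    (hxt : ∀ t ≥ (0:ℝ), DifferentiableAt ℝ xt t)
    (hdtc : ContinuousOn dt (Set.Ici 0))
    (hdt0 : Tendsto dt atTop (nhds 0))
    (V : ℝ → EuclideanSpace ℝ (Fin n) → ℝ)
    (hV : ContDiff ℝ 1 (fun p : ℝ × EuclideanSpace ℝ (Fin n) => V p.1 p.2))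
    (αl αu α σ : ℝ → ℝ)
    (hαl : IsClassKInf αl) (hαu : IsClassKInf αu) (hα : IsClassKInf α)
    (hσ : IsClassK σ)
    (hVbound : ∀ t ≥ (0:ℝ), ∀ ξ : EuclideanSpace ℝ (Fin n),
      αl ‖ξ‖ ≤ V t ξ ∧ V t ξ ≤ αu ‖ξ‖)
    (hdV : ∀ t ≥ (0:ℝ),
      deriv (fun s => V s (xt s)) t ≤ -α ‖xt t‖ + σ ‖dt t‖) :
    (∃ C, ∀ t ≥ (0:ℝ), ‖xt t‖ ≤ C) ∧ Tendsto xt atTop (nhds 0) :=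
  stmt6_general xt dt hxt hdt0 V hV αl αu α σ hαl hαu hα hσ hVbound hdV
end
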